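/- Let D be a domain with quotient field K and ∗ a finite character star-operation on D. If every height-one prime of D is a maximal ∗-ideal and conversely (X^{(1)}(D) = ∗-Max(D)), then X^{(1)}(D) = Ass(K/D) = t-Max(D) = w-Max(D). -/

import Mathlib

open FractionalIdeal

variable (D : Type*) (K : Type*) [CommRing D] [IsDomain D] [Field K] [Algebra D K]
  [IsFractionRing D K]

/-- A finite character star-operation on the integral domain `D`, acting on the
nonzero fractional ideals of `D` inside its quotient field `K`. -/
structure StarOperation where
  star : FractionalIdeal (nonZeroDivisors D) K → FractionalIdeal (nonZeroDivisors D) K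
  star_principal : ∀ x : K, x ≠ 0 →
    star (spanSingleton (nonZeroDivisors D) x) = spanSingleton (nonZeroDivisors D) x
  star_smul : ∀ (x : K) (A : FractionalIdeal (nonZeroDivisors D) K), x ≠ 0 → A ≠ 0 →
    star (spanSingleton (nonZeroDivisors D) x * A) = spanSingleton (nonZeroDivisors D) x * star A
  le_star : ∀ A, A ≠ 0 → A ≤ star A
  star_mono : ∀ A B, A ≠ 0 → B ≠ 0 → A ≤ B → star A ≤ star B
  star_star : ∀ A, A ≠ 0 → star (star A) = star A
  finite_character : ∀ A, A ≠ 0 → ∀ x ∈ star A,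
    ∃ B : FractionalIdeal (nonZeroDivisors D) K,
      B ≠ 0 ∧ B ≤ A ∧ (B : Submodule D K).FG ∧ x ∈ star B

/-- A prime ideal of height one: a nonzero prime with no nonzero prime strictly below it. -/
def HeightOnePrime (P : Ideal D) : Prop :=
  P.IsPrime ∧ P ≠ ⊥ ∧ ∀ Q : Ideal D, Q.IsPrime → Q < P → Q = ⊥

/-- Membership of `x : K` in the localization `D_P` viewed inside `K`. -/
def MemLocAt (P : Ideal D) (x : K) : Prop :=
  ∃ a t : D, t ∉ P ∧ x * algebraMap D K t = algebraMap D K a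

/-- An almost valuation ring: for nonzero `a, b` some power `a^n` divides `b^n` or
conversely. -/
def AVRing (R : Type*) [CommRing R] : Prop :=
  ∀ a b : R, a ≠ 0 → b ≠ 0 → ∃ n : ℕ, 0 < n ∧ (a ^ n ∣ b ^ n ∨ b ^ n ∣ a ^ n)

/-- The `v`-operation `A ↦ (A⁻¹)⁻¹` on fractional ideals. -/
noncomputable def vOp (A : FractionalIdeal (nonZeroDivisors D) K) : FractionalIdeal (nonZeroDivisors D) K :=
  (A⁻¹)⁻¹

/-- An integral ideal is a `t`-ideal if it contains `B_v` for every nonzero finitely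
generated subideal `B`. -/
def IsTIdeal (I : Ideal D) : Prop :=
  ∀ B : Ideal D, B ≠ ⊥ → B.FG → B ≤ I →
    vOp D K (B : FractionalIdeal (nonZeroDivisors D) K) ≤ (I : FractionalIdeal (nonZeroDivisors D) K)

/-- Maximal `t`-ideals. -/
def IsTMax (P : Ideal D) : Prop :=
  P ≠ ⊥ ∧ P ≠ ⊤ ∧ IsTIdeal D K P ∧
    ∀ J : Ideal D, J ≠ ⊤ → IsTIdeal D K J → P ≤ J → J = P

/-- An integral ideal is a `w`-ideal if it contains every `x ∈ K` with `xJ ⊆ I` for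
some finitely generated ideal `J` with `J⁻¹ = D`. -/
def IsWIdeal (I : Ideal D) : Prop :=
  ∀ x : K, (∃ J : Ideal D, J.FG ∧ ((J : FractionalIdeal (nonZeroDivisors D) K))⁻¹ = 1 ∧
      spanSingleton (nonZeroDivisors D) x * (J : FractionalIdeal (nonZeroDivisors D) K) ≤
        (I : FractionalIdeal (nonZeroDivisors D) K)) →
    x ∈ (I : FractionalIdeal (nonZeroDivisors D) K)

/-- Maximal `w`-ideals. -/
def IsWMax (P : Ideal D) : Prop :=
  P ≠ ⊥ ∧ P ≠ ⊤ ∧ IsWIdeal D K P ∧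
    ∀ J : Ideal D, J ≠ ⊤ → IsWIdeal D K J → P ≤ J → J = P

/-- `P ∈ Ass(K/D)`: `P` is a prime minimal over a conductor ideal `(aD : bD)`. -/
def InAssKD (P : Ideal D) : Prop :=
  P.IsPrime ∧ ∃ a b : D, a ≠ 0 ∧ b ≠ 0 ∧
    (Ideal.span {a}).colon (Ideal.span {b}) ≤ P ∧
    ∀ Q : Ideal D, Q.IsPrime → (Ideal.span {a}).colon (Ideal.span {b}) ≤ Q → Q ≤ P → Q = P

/-- An AGCD (almost GCD) domain: for all nonzero `a, b` there is `n ≥ 1` with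
`(aⁿ, bⁿ)_v` principal. -/
def IsAGCDDomain : Prop :=
  ∀ a b : D, a ≠ 0 → b ≠ 0 → ∃ n : ℕ, 0 < n ∧ ∃ d : D,
    vOp D K ((Ideal.span {a ^ n, b ^ n} : Ideal D) : FractionalIdeal (nonZeroDivisors D) K) =
      spanSingleton (nonZeroDivisors D) (algebraMap D K d)

/-- `D_P` is an almost valuation domain, for `P` a prime of `D`. -/
def AVAtPrime {D : Type*} [CommRing D] (P : Ideal D) (hP : P.IsPrime) : Prop :=
  AVRing (Localization (@Ideal.primeCompl D _ P hP))

namespace StarOperation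

variable {D K}
variable (s : StarOperation D K)

/-- The star closure of an integral ideal, as an integral ideal. -/
def starI (I : Ideal D) : Ideal D :=
  (s.star (I : FractionalIdeal (nonZeroDivisors D) K) : Submodule D K).comap
    (Algebra.linearMap D K)

/-- An integral `∗`-ideal. -/
def IsStarIdeal (I : Ideal D) : Prop :=
  s.star (I : FractionalIdeal (nonZeroDivisors D) K) = (I : FractionalIdeal (nonZeroDivisors D) K)

/-- A maximal `∗`-ideal: maximal among proper integral `∗`-ideals (such ideals are prime). -/
def IsMaxStarIdeal (P : Ideal D) : Prop :=
  P ≠ ⊥ ∧ P ≠ ⊤ ∧ P.IsPrime ∧ s.IsStarIdeal P ∧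
    ∀ J : Ideal D, J ≠ ⊤ → s.IsStarIdeal J → P ≤ J → J = P

/-- `∗`-invertibility of a fractional ideal. -/
def IsStarInvertible (A : FractionalIdeal (nonZeroDivisors D) K) : Prop :=
  s.star (A * A⁻¹) = 1

/-- `∗`-invertibility of an integral ideal. -/
def IsStarInvertibleI (I : Ideal D) : Prop :=
  s.IsStarInvertible (I : FractionalIdeal (nonZeroDivisors D) K)

/-- A `P`-`∗`-homogeneous ideal: nonzero, finitely generated, contained in the maximal
`∗`-ideal `P` and in no other maximal `∗`-ideal. -/
def IsHomogeneous (P I : Ideal D) : Prop :=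
  I ≠ ⊥ ∧ I.FG ∧ s.IsMaxStarIdeal P ∧ I ≤ P ∧
    ∀ Q : Ideal D, s.IsMaxStarIdeal Q → I ≤ Q → Q = P

/-- A type 1 `∗`-homogeneous ideal: `M(A) = √(A_∗)`. -/
def IsType1 (P I : Ideal D) : Prop := P = (s.starI I).radical

/-- A type 2 `∗`-homogeneous ideal: `A_∗ = (M(A)ⁿ)_∗` for some `n ≥ 1`. -/
def IsType2 (P I : Ideal D) : Prop :=
  ∃ n : ℕ, 0 < n ∧
    s.star (I : FractionalIdeal (nonZeroDivisors D) K) =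
      s.star ((P ^ n : Ideal D) : FractionalIdeal (nonZeroDivisors D) K)

/-- A `P`-`∗`-almost super-homogeneous ideal. -/
def IsAlmostSuperHomogeneous (P I : Ideal D) : Prop :=
  s.IsStarInvertibleI I ∧ s.IsHomogeneous P I ∧
    ∀ (k : ℕ) (b : Fin k → D), (∀ i, b i ∈ P) →
      (∃ r : ℕ, 0 < r ∧ ((I ^ r : Ideal D) : FractionalIdeal (nonZeroDivisors D) K) ≤
        s.star ((Ideal.span (Set.range b) : Ideal D) : FractionalIdeal (nonZeroDivisors D) K)) →
      ∃ n : ℕ, 0 < n ∧ s.IsStarInvertibleI (Ideal.span (Set.range fun i => b i ^ n))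

/-- A `∗`-super-homogeneous ideal: every `∗`-homogeneous ideal containing it is
`∗`-invertible. -/
def IsSuperHomogeneous (P I : Ideal D) : Prop :=
  s.IsHomogeneous P I ∧
    ∀ B Q : Ideal D, s.IsHomogeneous Q B → I ≤ B → s.IsStarInvertibleI B

/-- A `P`-`∗`-afg-homogeneous (almost factorial general homogeneous) ideal. -/
def IsAfgHomogeneous (P I : Ideal D) : Prop :=
  s.IsStarInvertibleI I ∧ s.IsHomogeneous P I ∧
    ∀ (k : ℕ) (b : Fin k → D), (∀ i, b i ∈ P) →
      (∃ r : ℕ, 0 < r ∧ ((I ^ r : Ideal D) : FractionalIdeal (nonZeroDivisors D) K) ≤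
        s.star ((Ideal.span (Set.range b) : Ideal D) : FractionalIdeal (nonZeroDivisors D) K)) →
      ∃ n : ℕ, 0 < n ∧ ∃ d : D,
        s.star ((Ideal.span (Set.range fun i => b i ^ n) : Ideal D) :
            FractionalIdeal (nonZeroDivisors D) K) =
          spanSingleton (nonZeroDivisors D) (algebraMap D K d)

/-- A `∗`-af-homogeneous ideal: every `∗`-homogeneous ideal containing it has a power
whose `∗`-closure is principal. -/
def IsAfHomogeneous (P I : Ideal D) : Prop :=
  s.IsHomogeneous P I ∧
    ∀ B Q : Ideal D, s.IsHomogeneous Q B → I ≤ B →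
      ∃ n : ℕ, 0 < n ∧ ∃ d : D,
        s.star ((B ^ n : Ideal D) : FractionalIdeal (nonZeroDivisors D) K) =
          spanSingleton (nonZeroDivisors D) (algebraMap D K d)

/-- `D` is a `∗`-SH domain with respect to a property of ideals: every nonzero proper
principal ideal is a `∗`-product of ideals with the given property. -/
def IsSHWith (prop : Ideal D → Prop) : Prop :=
  ∀ x : D, x ≠ 0 → ¬IsUnit x →
    ∃ (k : ℕ) (A : Fin k → Ideal D), (∀ i, prop (A i)) ∧
      s.star ((∏ i, A i : Ideal D) : FractionalIdeal (nonZeroDivisors D) K) =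
        ((Ideal.span {x} : Ideal D) : FractionalIdeal (nonZeroDivisors D) K)

/-- A `∗`-almost super-SH domain. -/
def IsAlmostSuperSH : Prop :=
  s.IsSHWith fun I => ∃ P, s.IsAlmostSuperHomogeneous P I

/-- Finite character: every nonzero nonunit lies in only finitely many maximal
`∗`-ideals. -/
def FiniteCharacterDom : Prop :=
  ∀ x : D, x ≠ 0 → ¬IsUnit x → {P : Ideal D | s.IsMaxStarIdeal P ∧ x ∈ P}.Finite

/-- Independence: no two distinct maximal `∗`-ideals contain a common nonzero prime. -/
def IndependentDom : Prop :=
  ∀ P Q : Ideal D, s.IsMaxStarIdeal P → s.IsMaxStarIdeal Q → P ≠ Q →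
    ∀ L : Ideal D, L.IsPrime → L ≠ ⊥ → ¬(L ≤ P ∧ L ≤ Q)

/-- A `∗`-h-local domain. -/
def IsHLocal : Prop := s.FiniteCharacterDom ∧ s.IndependentDom

/-- A `∗`-almost independent ring of Krull type. -/
def IsAlmostIRKT : Prop :=
  s.IsHLocal ∧ ∀ (P : Ideal D) (h : s.IsMaxStarIdeal P), AVAtPrime P h.2.2.1

/-- A `∗`-almost generalized Krull domain. -/
def IsAGKD : Prop :=
  (∀ x : K, (∀ P : Ideal D, HeightOnePrime D P → MemLocAt D K P x) →
      ∃ d : D, algebraMap D K d = x) ∧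
  (∀ x : D, x ≠ 0 → ¬IsUnit x → {P : Ideal D | HeightOnePrime D P ∧ x ∈ P}.Finite) ∧
  (∀ P : Ideal D, s.IsMaxStarIdeal P ↔ HeightOnePrime D P) ∧
  (∀ (P : Ideal D) (h : s.IsMaxStarIdeal P), AVAtPrime P h.2.2.1)

/-- A `∗`-Krull domain: `∗`-h-local, `∗-Max(D) = X⁽¹⁾(D)`, and `D_P` is a DVR for each
maximal `∗`-ideal `P`. -/
def IsStarKrull : Prop :=
  s.IsHLocal ∧ (∀ P : Ideal D, s.IsMaxStarIdeal P ↔ HeightOnePrime D P) ∧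
    ∀ (P : Ideal D) (h : s.IsMaxStarIdeal P),
      @IsDiscreteValuationRing (Localization (@Ideal.primeCompl D _ P h.2.2.1)) _
        (IsLocalization.isDomain_localization (@Ideal.primeCompl_le_nonZeroDivisors D _ _ P h.2.2.1))

/-- A `∗`-almost Bézout domain. -/
def IsAlmostBezout : Prop :=
  ∀ a b : D, a ≠ 0 → b ≠ 0 → ∃ n : ℕ, 0 < n ∧ ∃ d : D,
    s.star ((Ideal.span {a ^ n, b ^ n} : Ideal D) : FractionalIdeal (nonZeroDivisors D) K) =
      spanSingleton (nonZeroDivisors D) (algebraMap D K d)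

/-- The `∗`-class group `Cl_∗(D)` is torsion: every `∗`-invertible fractional ideal has a
power whose `∗`-closure is principal. -/
def HasTorsionClassGroup : Prop :=
  ∀ A : FractionalIdeal (nonZeroDivisors D) K, A ≠ 0 → s.IsStarInvertible A →
    ∃ n : ℕ, 0 < n ∧ ∃ x : K, s.star (A ^ n) = spanSingleton (nonZeroDivisors D) x

end StarOperation

variable {D : Type*} {K : Type*} [CommRing D] [IsDomain D] [Field K] [Algebra D K]
  [IsFractionRing D K]

open StarOperation

/-!
Height-one primes and the primes of `Ass(K/D)` are minimal over `v`-ideals (a nonzero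
principal ideal, resp. a conductor `(aD : bD)`), and a prime `P` minimal over a `t`-ideal `I` is
a `t`-ideal: for finitely generated `B ⊆ P` some `t ∉ P` has `tBⁿ ⊆ I`, so `x ∈ B_v` gives
`txⁿ ∈ (tBⁿ)_v ⊆ I`. As `A_∗ ⊆ A_v` and `∗` has finite character, `t`-ideals are `∗`-ideals, so
every nonzero proper `t`-ideal lies in a maximal `∗`-ideal, i.e. in a height-one prime, which is
itself a `t`-ideal. This gives `X¹(D) = Ass(K/D) = t-Max(D)`. Finally `t`-ideals are `w`-ideals,
and the `t`-closure of a proper `w`-ideal is proper, so `w`-maximal and `t`-maximal ideals agree.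
-/

local notation "FI" => FractionalIdeal (nonZeroDivisors D) K

instance FractionalIdeal.instNoZeroDivisors : NoZeroDivisors FI where
  eq_zero_or_eq_zero_of_mul_eq_zero {A B} hAB := by
    by_contra! hne
    obtain ⟨a, ha0, ha⟩ := exists_ne_zero_mem_isInteger hne.1
    obtain ⟨b, hb0, hb⟩ := exists_ne_zero_mem_isInteger hne.2
    have hab := FractionalIdeal.mul_mem_mul ha hb
    rw [hAB, FractionalIdeal.mem_zero_iff, ← map_mul, IsFractionRing.to_map_eq_zero_iff] at hab
    exact mul_ne_zero ha0 hb0 hab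

lemma FractionalIdeal.inv_ne_zero_of_ne_zero {A : FI} (hA : A ≠ 0) : A⁻¹ ≠ 0 := by
  intro h
  have hden := den_mem_inv hA
  rw [h, FractionalIdeal.mem_zero_iff, IsFractionRing.to_map_eq_zero_iff] at hden
  exact nonZeroDivisors.coe_ne_zero _ hden

lemma FractionalIdeal.algebraMap_mem_coeIdeal_iff {R P : Type*} [CommRing R] [CommRing P]
    [Algebra R P] [FaithfulSMul R P] {S : Submonoid R} {I : Ideal R} {x : R} :
    algebraMap R P x ∈ (I : FractionalIdeal S P) ↔ x ∈ I := by
  simp only [mem_coeIdeal, (FaithfulSMul.algebraMap_injective R P).eq_iff, exists_eq_right]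

@[simp]
lemma vOp_zero : vOp D K (0 : FI) = 0 := by
  simp only [vOp, FractionalIdeal.inv_zero']

lemma mem_vOp_iff {A : FI} (hA : A ≠ 0) {x : K} :
    x ∈ vOp D K A ↔ ∀ y ∈ A⁻¹, x * y ∈ (1 : FI) :=
  mem_inv_iff (inv_ne_zero_of_ne_zero hA)

lemma le_vOp (A : FI) : A ≤ vOp D K A := by
  rcases eq_or_ne A 0 with rfl | hA
  · exact FractionalIdeal.zero_le _
  intro x hx
  rw [mem_vOp_iff hA]
  intro y hy
  rw [mul_comm]
  exact (mem_inv_iff hA).mp hy x hx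

lemma vOp_mono {A B : FI} (h : A ≤ B) : vOp D K A ≤ vOp D K B := by
  rcases eq_or_ne A 0 with rfl | hA
  · simp
  have hB : B ≠ 0 := ne_bot_of_le_ne_bot hA h
  exact inv_anti_mono (inv_ne_zero_of_ne_zero hB) (inv_ne_zero_of_ne_zero hA)
    (inv_anti_mono hA hB h)

lemma vOp_coeIdeal_mono {I J : Ideal D} (h : I ≤ J) : vOp D K (I : FI) ≤ vOp D K J :=
  vOp_mono ((coeIdeal_le_coeIdeal K).mpr h)

lemma inv_vOp (A : FI) : (vOp D K A)⁻¹ = A⁻¹ := by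
  rcases eq_or_ne A 0 with rfl | hA
  · simp [FractionalIdeal.inv_zero']
  exact le_antisymm (inv_anti_mono hA (ne_bot_of_le_ne_bot hA (le_vOp A)) (le_vOp A))
    (le_vOp A⁻¹)

lemma vOp_vOp (A : FI) : vOp D K (vOp D K A) = vOp D K A := by
  rw [vOp, inv_vOp]
  rfl

lemma vOp_spanSingleton (x : K) :
    vOp D K (spanSingleton (nonZeroDivisors D) x) = spanSingleton (nonZeroDivisors D) x := by
  rw [vOp, spanSingleton_inv, spanSingleton_inv, inv_inv]

lemma vOp_le_one {A : FI} (h : A ≤ 1) : vOp D K A ≤ 1 := by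
  simpa [← spanSingleton_one, vOp_spanSingleton] using vOp_mono (D := D) h

lemma vOp_mul_le (A B : FI) : vOp D K A * vOp D K B ≤ vOp D K (A * B) := by
  rcases eq_or_ne A 0 with rfl | hA
  · simp
  rcases eq_or_ne B 0 with rfl | hB
  · simp
  rw [FractionalIdeal.mul_le]
  intro a ha b hb
  rw [mem_vOp_iff (mul_ne_zero hA hB)]
  intro z hz
  have hbz : b * z ∈ A⁻¹ := by
    rw [mem_inv_iff hA]
    intro a' ha'
    have hza' : z * a' ∈ B⁻¹ := by
      rw [mem_inv_iff hB]
      intro b' hb'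
      simpa [mul_assoc] using
        (mem_inv_iff (mul_ne_zero hA hB)).mp hz _ (FractionalIdeal.mul_mem_mul ha' hb')
    simpa [mul_assoc] using (mem_vOp_iff hB).mp hb _ hza'
  simpa [mul_assoc] using (mem_vOp_iff hA).mp ha _ hbz

lemma pow_vOp_le (A : FI) (n : ℕ) : vOp D K A ^ n ≤ vOp D K (A ^ n) := by
  induction n with
  | zero => simp [← spanSingleton_one, vOp_spanSingleton]
  | succ n ih =>
    rw [pow_succ, pow_succ]
    exact (mul_le_mul_left ih _).trans (vOp_mul_le _ _)

section MinimalPrimes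

variable {R : Type*} [CommRing R] {I P : Ideal R}

lemma Ideal.IsMinimalPrime.exists_mul_pow_mem (hP : I.IsMinimalPrime P) {x : R} (hx : x ∈ P) :
    ∃ t ∉ P, ∃ n : ℕ, t * x ^ n ∈ I := by
  have := hP.isPrime
  by_contra! H
  -- otherwise a prime `Q ⊇ I` avoids the multiplicative set `(R \ P) xᴺ`; then `Q ⊊ P`
  obtain ⟨Q, hQ, hIQ, hdisj⟩ := I.exists_le_prime_disjoint (P.primeCompl ⊔ Submonoid.powers x) <| by
    refine Set.disjoint_right.mpr fun y hy hyI => ?_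
    obtain ⟨t, ht, z, ⟨n, rfl⟩, rfl⟩ := Submonoid.mem_sup.mp hy
    exact H t ht n hyI
  have hQP : Q ≤ P := fun q hq => by_contra fun hqP =>
    Set.disjoint_left.mp hdisj hq (Submonoid.mem_sup_left hqP)
  exact Set.disjoint_left.mp hdisj (hP.2 ⟨hQ, hIQ⟩ hQP hx)
    (Submonoid.mem_sup_right (Submonoid.mem_powers x))

lemma Ideal.IsMinimalPrime.exists_span_mul_pow_le (hP : I.IsMinimalPrime P) {B : Ideal R}
    (hB : B.FG) (hBP : B ≤ P) : ∃ t ∉ P, ∃ n : ℕ, Ideal.span {t} * B ^ n ≤ I := by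
  induction B, hB using Submodule.fg_induction with
  | singleton x =>
    obtain ⟨t, ht, n, hn⟩ := hP.exists_mul_pow_mem (hBP (Ideal.mem_span_singleton_self x))
    refine ⟨t, ht, n, ?_⟩
    rwa [Ideal.submodule_span_eq, Ideal.span_singleton_pow, Ideal.span_singleton_mul_span_singleton,
      Ideal.span_singleton_le_iff_mem]
  | sup B₁ B₂ _ _ ih₁ ih₂ =>
    obtain ⟨t₁, ht₁, n₁, h₁⟩ := ih₁ (le_sup_left.trans hBP)
    obtain ⟨t₂, ht₂, n₂, h₂⟩ := ih₂ (le_sup_right.trans hBP)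
    refine ⟨t₁ * t₂, fun h => (hP.isPrime.mem_or_mem h).elim ht₁ ht₂, n₁ + n₂, ?_⟩
    rw [← Ideal.span_singleton_mul_span_singleton]
    calc Ideal.span {t₁} * Ideal.span {t₂} * (B₁ ⊔ B₂) ^ (n₁ + n₂)
        ≤ Ideal.span {t₁} * Ideal.span {t₂} * (B₁ ^ n₁ ⊔ B₂ ^ n₂) :=
          Ideal.mul_mono_right Ideal.sup_pow_add_le_pow_sup_pow
      _ = Ideal.span {t₂} * (Ideal.span {t₁} * B₁ ^ n₁) ⊔
            Ideal.span {t₁} * (Ideal.span {t₂} * B₂ ^ n₂) := by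
          rw [Ideal.mul_sup]; congr 1 <;> ring
      _ ≤ I := sup_le (le_trans (Ideal.mul_mono_right h₁) Ideal.mul_le_right)
          (le_trans (Ideal.mul_mono_right h₂) Ideal.mul_le_right)

lemma HeightOnePrime.isMinimalPrime (hP : HeightOnePrime R P) {a : R} (haP : a ∈ P)
    (ha0 : a ≠ 0) : (Ideal.span {a}).IsMinimalPrime P := by
  refine ⟨⟨hP.1, (Ideal.span_singleton_le_iff_mem _).mpr haP⟩, fun Q ⟨hQ, haQ⟩ hQP => ?_⟩
  refine (eq_or_lt_of_le hQP).elim ge_of_eq fun hlt => absurd ?_ ha0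
  simpa [hP.2.2 Q hQ hlt] using (Ideal.span_singleton_le_iff_mem _).mp haQ

lemma HeightOnePrime.eq_of_le {M : Ideal R} (hM : HeightOnePrime R M) (hP : P.IsPrime)
    (hP0 : P ≠ ⊥) (hPM : P ≤ M) : P = M :=
  (eq_or_lt_of_le hPM).resolve_right fun hlt => hP0 (hM.2.2 P hP hlt)

lemma inAssKD_iff : InAssKD R P ↔
    ∃ a b : R, a ≠ 0 ∧ b ≠ 0 ∧ ((Ideal.span {a}).colon (Ideal.span {b})).IsMinimalPrime P :=
  ⟨fun ⟨hP, a, b, ha, hb, hle, hmin⟩ => ⟨a, b, ha, hb, ⟨hP, hle⟩,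
      fun Q ⟨hQ, hQle⟩ hQP => (hmin Q hQ hQle hQP).ge⟩,
    fun ⟨a, b, ha, hb, hmin⟩ => ⟨hmin.isPrime, a, b, ha, hb, hmin.le,
      fun _ hQ hQle hQP => le_antisymm hQP (hmin.2 ⟨hQ, hQle⟩ hQP)⟩⟩

lemma HeightOnePrime.inAssKD (hP : HeightOnePrime R P) : InAssKD R P := by
  obtain ⟨a, haP, ha0⟩ := Submodule.exists_mem_ne_zero_of_ne_bot hP.2.1
  have : Nontrivial R := ⟨⟨a, 0, ha0⟩⟩
  have hcolon : (Ideal.span {a}).colon (Ideal.span {(1 : R)}) = Ideal.span {a} := by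
    ext x
    rw [Ideal.mem_colon_span_singleton, mul_one]
  refine inAssKD_iff.mpr ⟨a, 1, ha0, one_ne_zero, ?_⟩
  rw [hcolon]
  exact hP.isMinimalPrime haP ha0

lemma InAssKD.ne_bot (hP : InAssKD R P) : P ≠ ⊥ := by
  obtain ⟨a, b, ha0, -, hmin⟩ := inAssKD_iff.mp hP
  refine ne_bot_of_le_ne_bot (fun h => ha0 ?_) hmin.le
  rw [← Submodule.mem_bot R, ← h]
  exact Ideal.mem_colon_span_singleton.mpr
    (Ideal.mul_mem_right b _ (Ideal.mem_span_singleton_self a))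

end MinimalPrimes

lemma isTIdeal_of_vOp_le {I : Ideal D} (h : vOp D K (I : FI) ≤ I) : IsTIdeal D K I :=
  fun _ _ _ hB => (vOp_coeIdeal_mono hB).trans h

lemma isTIdeal_span_singleton (a : D) : IsTIdeal D K (Ideal.span {a}) :=
  isTIdeal_of_vOp_le (by rw [coeIdeal_span_singleton, vOp_spanSingleton])

lemma isTIdeal_colon_span_singleton (a : D) {b : D} (hb : b ≠ 0) :
    IsTIdeal D K ((Ideal.span {a}).colon (Ideal.span {b})) := by
  have hb' : algebraMap D K b ≠ 0 := IsFractionRing.to_map_ne_zero_of_mem_nonZeroDivisors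
    (mem_nonZeroDivisors_of_ne_zero hb)
  have hle : (((Ideal.span {a}).colon (Ideal.span {b}) : Ideal D) : FI) ≤
      spanSingleton (nonZeroDivisors D) (algebraMap D K a / algebraMap D K b) := by
    intro x hx
    obtain ⟨d, hd, rfl⟩ := (mem_coeIdeal _).mp hx
    obtain ⟨e, he⟩ := Ideal.mem_span_singleton'.mp (Ideal.mem_colon_span_singleton.mp hd)
    refine (mem_spanSingleton _).mpr ⟨e, ?_⟩
    rw [Algebra.smul_def, mul_div_assoc', div_eq_iff hb', ← map_mul, ← map_mul, he]
  refine isTIdeal_of_vOp_le fun x hx => ?_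
  obtain ⟨d, rfl⟩ := (mem_one_iff _).mp (vOp_le_one coeIdeal_le_one hx)
  have hx' := vOp_mono hle hx
  rw [vOp_spanSingleton] at hx'
  obtain ⟨e, he⟩ := (mem_spanSingleton _).mp hx'
  rw [Algebra.smul_def, mul_div_assoc', div_eq_iff hb', ← map_mul, ← map_mul,
    (FaithfulSMul.algebraMap_injective D K).eq_iff] at he
  exact algebraMap_mem_coeIdeal_iff.mpr
    (Ideal.mem_colon_span_singleton.mpr (Ideal.mem_span_singleton'.mpr ⟨e, he⟩))

lemma isTIdeal_of_isMinimalPrime {I P : Ideal D} (hI : IsTIdeal D K I)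
    (hP : I.IsMinimalPrime P) : IsTIdeal D K P := by
  intro B hB0 hBfg hBP x hx
  obtain ⟨t, htP, n, hle⟩ := hP.exists_span_mul_pow_le hBfg hBP
  obtain ⟨y, rfl⟩ := (mem_one_iff _).mp (vOp_le_one coeIdeal_le_one hx)
  have ht0 : t ≠ 0 := fun h => htP (h ▸ P.zero_mem)
  have hC0 : Ideal.span {t} * B ^ n ≠ ⊥ :=
    mul_ne_zero (Ideal.span_singleton_eq_bot.not.mpr ht0) (pow_ne_zero n hB0)
  have hty : algebraMap D K (t * y ^ n) ∈ vOp D K ((Ideal.span {t} * B ^ n : Ideal D) : FI) := by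
    rw [coeIdeal_mul, coeIdeal_span_singleton, coeIdeal_pow, map_mul, map_pow]
    refine vOp_mul_le _ _ (FractionalIdeal.mul_mem_mul ?_ (pow_vOp_le _ n ?_))
    · rw [vOp_spanSingleton]
      exact mem_spanSingleton_self _ _
    · rw [← FractionalIdeal.mem_coe, FractionalIdeal.coe_pow]
      exact Submodule.pow_mem_pow _ hx n
  have htyI := algebraMap_mem_coeIdeal_iff.mp
    (hI _ hC0 ((Submodule.fg_span_singleton t).mul (Submodule.FG.pow hBfg n)) hle hty)
  exact algebraMap_mem_coeIdeal_iff.mpr <| hP.isPrime.mem_of_pow_mem n <|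
    (hP.isPrime.mem_or_mem (hP.le htyI)).resolve_left htP

lemma HeightOnePrime.isTIdeal {P : Ideal D} (hP : HeightOnePrime D P) : IsTIdeal D K P := by
  obtain ⟨a, haP, ha0⟩ := Submodule.exists_mem_ne_zero_of_ne_bot hP.2.1
  exact isTIdeal_of_isMinimalPrime (isTIdeal_span_singleton a) (hP.isMinimalPrime haP ha0)

lemma InAssKD.isTIdeal {P : Ideal D} (hP : InAssKD D P) : IsTIdeal D K P := by
  obtain ⟨a, b, -, hb, hmin⟩ := inAssKD_iff.mp hP
  exact isTIdeal_of_isMinimalPrime (isTIdeal_colon_span_singleton a hb) hmin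

section WIdeals

lemma IsTIdeal.isWIdeal {I : Ideal D} (ht : IsTIdeal D K I) : IsWIdeal D K I := by
  rintro x ⟨J, hJfg, hJinv, hle⟩
  rcases eq_or_ne x 0 with rfl | hx0
  · exact zero_mem _
  have hJ0 : (J : FI) ≠ 0 := by
    rintro h
    rw [h, FractionalIdeal.inv_zero'] at hJinv
    exact zero_ne_one hJinv
  obtain ⟨B, hB⟩ := le_one_iff_exists_coeIdeal.mp (hle.trans coeIdeal_le_one)
  have hB0 : B ≠ ⊥ := by
    rw [← coeIdeal_ne_zero (K := K), hB]
    exact mul_ne_zero (spanSingleton_ne_zero_iff.mpr hx0) hJ0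
  have hBfg : B.FG := by
    rw [← coeIdeal_fg (nonZeroDivisors D) (FaithfulSMul.algebraMap_injective D K),
      hB, FractionalIdeal.coe_mul, coe_spanSingleton]
    exact (Submodule.fg_span_singleton x).mul
      ((coeIdeal_fg _ (FaithfulSMul.algebraMap_injective D K) J).mpr hJfg)
  have hJv : vOp D K (J : FI) = 1 := by rw [vOp, hJinv, inv_one]
  -- `x ∈ x J_v ⊆ (x J)_v`, and `x J` is a finitely generated ideal inside the `t`-ideal `I`
  have hx : x * 1 ∈ vOp D K (spanSingleton _ x) * vOp D K (J : FI) := by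
    rw [vOp_spanSingleton, hJv]
    exact FractionalIdeal.mul_mem_mul (mem_spanSingleton_self _ x) (one_mem_one _)
  rw [mul_one] at hx
  refine ht B hB0 hBfg ((coeIdeal_le_coeIdeal K).mp (hB ▸ hle)) ?_
  rw [hB]
  exact vOp_mul_le _ _ hx

variable (K) in
def tClosure (J : Ideal D) : Ideal D where
  carrier := {d | ∃ B : Ideal D, B.FG ∧ B ≤ J ∧ algebraMap D K d ∈ vOp D K (B : FI)}
  zero_mem' := ⟨⊥, Submodule.fg_bot, bot_le, by simp⟩
  add_mem' := by
    rintro x y ⟨B₁, hB₁, hB₁J, hx⟩ ⟨B₂, hB₂, hB₂J, hy⟩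
    refine ⟨B₁ ⊔ B₂, Submodule.FG.sup hB₁ hB₂, sup_le hB₁J hB₂J, ?_⟩
    rw [map_add]
    exact Submodule.add_mem (vOp D K ((B₁ ⊔ B₂ : Ideal D) : FI) : Submodule D K)
      (vOp_coeIdeal_mono le_sup_left hx) (vOp_coeIdeal_mono le_sup_right hy)
  smul_mem' := by
    rintro c d ⟨B, hB, hBJ, hd⟩
    refine ⟨B, hB, hBJ, ?_⟩
    rw [smul_eq_mul, map_mul, ← Algebra.smul_def]
    exact Submodule.smul_mem _ c hd

variable {J : Ideal D}

lemma le_tClosure : J ≤ tClosure K J := by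
  intro d hd
  refine ⟨Ideal.span {d}, Submodule.fg_span_singleton d,
    (Ideal.span_singleton_le_iff_mem _).mpr hd, ?_⟩
  rw [coeIdeal_span_singleton, vOp_spanSingleton]
  exact mem_spanSingleton_self _ _

lemma tClosure_ne_top (hJ : IsWIdeal D K J) (hJtop : J ≠ ⊤) : tClosure K J ≠ ⊤ := by
  intro htop
  obtain ⟨B, hB, hBJ, h1⟩ := (Ideal.eq_top_iff_one _).mp htop
  have hBv : vOp D K (B : FI) = 1 := le_antisymm (vOp_le_one coeIdeal_le_one)
    (FractionalIdeal.one_le.mpr (by simpa using h1))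
  have hBinv : (B : FI)⁻¹ = 1 := by rw [← inv_vOp, hBv, inv_one]
  have h1J : algebraMap D K 1 ∈ (J : FI) := by
    refine (map_one (algebraMap D K)).symm ▸ hJ 1 ⟨B, hB, hBinv, ?_⟩
    simpa [spanSingleton_one] using (coeIdeal_le_coeIdeal K).mpr hBJ
  exact hJtop ((Ideal.eq_top_iff_one J).mpr (algebraMap_mem_coeIdeal_iff.mp h1J))

lemma exists_fg_le_vOp_of_le_tClosure {B : Ideal D} (hB : B.FG) (hBJ : B ≤ tClosure K J) :
    ∃ C : Ideal D, C.FG ∧ C ≤ J ∧ (B : FI) ≤ vOp D K C := by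
  induction B, hB using Submodule.fg_induction with
  | singleton x =>
    obtain ⟨C, hC, hCJ, hx⟩ := hBJ (Ideal.mem_span_singleton_self x)
    refine ⟨C, hC, hCJ, ?_⟩
    rw [Ideal.submodule_span_eq, coeIdeal_span_singleton]
    exact spanSingleton_le_iff_mem.mpr hx
  | sup B₁ B₂ _ _ ih₁ ih₂ =>
    obtain ⟨C₁, hC₁, hC₁J, h₁⟩ := ih₁ (le_sup_left.trans hBJ)
    obtain ⟨C₂, hC₂, hC₂J, h₂⟩ := ih₂ (le_sup_right.trans hBJ)
    refine ⟨C₁ ⊔ C₂, Submodule.FG.sup hC₁ hC₂, sup_le hC₁J hC₂J, ?_⟩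
    rw [coeIdeal_sup]
    exact sup_le (h₁.trans (vOp_coeIdeal_mono le_sup_left))
      (h₂.trans (vOp_coeIdeal_mono le_sup_right))

lemma isTIdeal_tClosure : IsTIdeal D K (tClosure K J) := by
  intro B _ hB hBJ x hx
  obtain ⟨C, hC, hCJ, hBC⟩ := exists_fg_le_vOp_of_le_tClosure hB hBJ
  have hxC : x ∈ vOp D K (C : FI) := vOp_vOp (D := D) (C : FI) ▸ vOp_mono hBC hx
  obtain ⟨d, rfl⟩ := (mem_one_iff _).mp (vOp_le_one coeIdeal_le_one hxC)
  exact mem_coeIdeal_of_mem _ ⟨C, hC, hCJ, hxC⟩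

lemma IsTMax.isWMax {P : Ideal D} (hP : IsTMax D K P) : IsWMax D K P := by
  obtain ⟨hP0, hPtop, hPt, hmax⟩ := hP
  refine ⟨hP0, hPtop, hPt.isWIdeal, fun J hJtop hJw hPJ => le_antisymm ?_ hPJ⟩
  exact le_tClosure.trans (hmax _ (tClosure_ne_top hJw hJtop) isTIdeal_tClosure
    (hPJ.trans le_tClosure)).le

end WIdeals

namespace StarOperation

variable (s : StarOperation D K)

omit [IsDomain D] in
lemma star_one : s.star 1 = 1 := by
  simpa using s.star_principal 1 one_ne_zero

omit [IsDomain D] in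
lemma star_le_one {A : FI} (hA : A ≠ 0) (h : A ≤ 1) : s.star A ≤ 1 :=
  s.star_one ▸ s.star_mono A 1 hA one_ne_zero h

lemma mul_star_le {A B : FI} (hA : A ≠ 0) (hB : B ≠ 0) : A * s.star B ≤ s.star (A * B) := by
  rw [FractionalIdeal.mul_le]
  intro a ha b hb
  rcases eq_or_ne a 0 with rfl | ha0
  · simpa using FractionalIdeal.zero_mem _
  have haB : spanSingleton (nonZeroDivisors D) a * B ≤ A * B :=
    mul_le_mul_left (spanSingleton_le_iff_mem.mpr ha) B
  refine s.star_mono _ _ (mul_ne_zero (spanSingleton_ne_zero_iff.mpr ha0) hB)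
    (mul_ne_zero hA hB) haB ?_
  rw [s.star_smul a B ha0 hB]
  exact FractionalIdeal.mul_mem_mul (mem_spanSingleton_self _ a) hb

lemma star_mul_star_le {A B : FI} (hA : A ≠ 0) (hB : B ≠ 0) :
    s.star A * s.star B ≤ s.star (A * B) := by
  have hsA : s.star A ≠ 0 := ne_bot_of_le_ne_bot hA (s.le_star A hA)
  have hAB : A * B ≠ 0 := mul_ne_zero hA hB
  calc s.star A * s.star B ≤ s.star (s.star A * B) := s.mul_star_le hsA hB
    _ ≤ s.star (s.star (A * B)) := by
        refine s.star_mono _ _ (mul_ne_zero hsA hB)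
          (ne_bot_of_le_ne_bot hAB (s.le_star _ hAB)) ?_
        simpa only [mul_comm] using s.mul_star_le hB hA
    _ = s.star (A * B) := s.star_star _ hAB

lemma star_le_vOp {A : FI} (hA : A ≠ 0) : s.star A ≤ vOp D K A := by
  have hA' := inv_ne_zero_of_ne_zero hA
  rw [vOp, FractionalIdeal.inv_eq (I := A⁻¹), FractionalIdeal.le_div_iff_mul_le hA', mul_comm]
  calc A⁻¹ * s.star A ≤ s.star (A⁻¹ * A) := s.mul_star_le hA' hA
    _ ≤ 1 := s.star_le_one (mul_ne_zero hA' hA) <| by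
        rw [mul_comm, FractionalIdeal.inv_eq]
        exact mul_one_div_le_one

omit [IsDomain D] in
lemma exists_fg_le_of_mem_star {I : Ideal D} (hI : I ≠ ⊥) {x : K}
    (hx : x ∈ s.star (I : FI)) : ∃ B : Ideal D, B ≠ ⊥ ∧ B.FG ∧ B ≤ I ∧ x ∈ s.star (B : FI) := by
  obtain ⟨B, hB0, hBI, hBfg, hxB⟩ := s.finite_character _ (coeIdeal_ne_zero.mpr hI) x hx
  obtain ⟨B, rfl⟩ := le_one_iff_exists_coeIdeal.mp (hBI.trans coeIdeal_le_one)
  exact ⟨B, coeIdeal_ne_zero.mp hB0,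
    (coeIdeal_fg _ (FaithfulSMul.algebraMap_injective D K) B).mp hBfg,
    (coeIdeal_le_coeIdeal K).mp hBI, hxB⟩

omit [IsDomain D] in
lemma isStarIdeal_of_star_le {I : Ideal D} (hI : I ≠ ⊥) (h : s.star (I : FI) ≤ I) :
    s.IsStarIdeal I :=
  le_antisymm h (s.le_star _ (coeIdeal_ne_zero.mpr hI))

lemma isStarIdeal_of_isTIdeal {I : Ideal D} (hI : I ≠ ⊥) (ht : IsTIdeal D K I) :
    s.IsStarIdeal I := by
  refine s.isStarIdeal_of_star_le hI fun x hx => ?_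
  obtain ⟨B, hB0, hBfg, hBI, hxB⟩ := s.exists_fg_le_of_mem_star hI hx
  exact ht B hB0 hBfg hBI (s.star_le_vOp (coeIdeal_ne_zero.mpr hB0) hxB)

omit [IsDomain D] in
lemma isStarIdeal_sSup {c : Set (Ideal D)} (hc : c.Nonempty) (hdir : DirectedOn (· ≤ ·) c)
    (hstar : ∀ J ∈ c, s.IsStarIdeal J) (h0 : sSup c ≠ ⊥) : s.IsStarIdeal (sSup c) := by
  refine s.isStarIdeal_of_star_le h0 fun x hx => ?_
  obtain ⟨B, hB0, hBfg, hBc, hxB⟩ := s.exists_fg_le_of_mem_star h0 hx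
  obtain ⟨J, hJc, hBJ⟩ := (CompleteLattice.isCompactElement_iff_le_of_directed_sSup_le _ B).mp
    ((Submodule.fg_iff_compact B).mp hBfg) c hc hdir hBc
  have hxJ : x ∈ (J : FI) := hstar J hJc ▸ s.star_mono _ _ (coeIdeal_ne_zero.mpr hB0)
    (coeIdeal_ne_zero.mpr (ne_bot_of_le_ne_bot hB0 hBJ)) ((coeIdeal_le_coeIdeal K).mpr hBJ) hxB
  exact (coeIdeal_le_coeIdeal K).mpr (le_sSup hJc) hxJ

omit [IsDomain D] in
lemma coeIdeal_starI {I : Ideal D} (hI : I ≠ ⊥) : (s.starI I : FI) = s.star (I : FI) := by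
  refine le_antisymm (fun x hx => ?_) (fun x hx => ?_)
  · obtain ⟨d, hd, rfl⟩ := (mem_coeIdeal _).mp hx
    exact hd
  · obtain ⟨d, rfl⟩ := (mem_one_iff _).mp <|
      s.star_le_one (coeIdeal_ne_zero.mpr hI) coeIdeal_le_one hx
    exact mem_coeIdeal_of_mem _ hx

omit [IsDomain D] in
lemma le_starI {I : Ideal D} (hI : I ≠ ⊥) : I ≤ s.starI I :=
  (coeIdeal_le_coeIdeal K).mp (s.coeIdeal_starI hI ▸ s.le_star _ (coeIdeal_ne_zero.mpr hI))

omit [IsDomain D] in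
lemma isStarIdeal_starI {I : Ideal D} (hI : I ≠ ⊥) : s.IsStarIdeal (s.starI I) := by
  rw [IsStarIdeal, s.coeIdeal_starI hI, s.star_star _ (coeIdeal_ne_zero.mpr hI)]

lemma isPrime_of_maximal {M : Ideal D} (hM0 : M ≠ ⊥) (hMtop : M ≠ ⊤) (hMs : s.IsStarIdeal M)
    (hmax : ∀ J : Ideal D, J ≠ ⊤ → s.IsStarIdeal J → M ≤ J → J = M) : M.IsPrime := by
  have hsup0 (c : D) : M ⊔ Ideal.span {c} ≠ ⊥ := ne_bot_of_le_ne_bot hM0 le_sup_left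
  -- for `c ∉ M`, the `∗`-ideal `(M + cD)_∗` properly contains `M`, hence is all of `D`
  have key (c : D) (hc : c ∉ M) : s.star ((M ⊔ Ideal.span {c} : Ideal D) : FI) = 1 := by
    by_contra hne
    have htop : s.starI (M ⊔ Ideal.span {c}) ≠ ⊤ := fun htop => hne <| by
      rw [← s.coeIdeal_starI (hsup0 c), htop, coeIdeal_top]
    have hcM := hmax _ htop (s.isStarIdeal_starI (hsup0 c))
      (le_sup_left.trans (s.le_starI (hsup0 c)))
    exact hc (hcM ▸ s.le_starI (hsup0 c) (Ideal.mem_sup_right (Ideal.mem_span_singleton_self c)))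
  refine ⟨hMtop, fun {a b} hab => ?_⟩
  by_contra! hnot
  obtain ⟨ha, hb⟩ := hnot
  have hprod : (M ⊔ Ideal.span {a}) * (M ⊔ Ideal.span {b}) ≤ M := by
    rw [Ideal.sup_mul, Ideal.mul_sup, Ideal.mul_sup, Ideal.span_singleton_mul_span_singleton]
    exact sup_le (sup_le Ideal.mul_le_right Ideal.mul_le_left)
      (sup_le Ideal.mul_le_right ((Ideal.span_singleton_le_iff_mem _).mpr hab))
  have hne (c : D) : ((M ⊔ Ideal.span {c} : Ideal D) : FI) ≠ 0 := coeIdeal_ne_zero.mpr (hsup0 c)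
  apply hMtop
  rw [eq_top_iff, ← coeIdeal_le_coeIdeal K, coeIdeal_top]
  calc (1 : FI) = s.star ((M ⊔ Ideal.span {a} : Ideal D) : FI) *
        s.star ((M ⊔ Ideal.span {b} : Ideal D) : FI) := by rw [key a ha, key b hb, mul_one]
    _ ≤ s.star (((M ⊔ Ideal.span {a}) * (M ⊔ Ideal.span {b}) : Ideal D) : FI) := by
        rw [coeIdeal_mul]
        exact s.star_mul_star_le (hne a) (hne b)
    _ ≤ s.star (M : FI) := s.star_mono _ _
        (coeIdeal_ne_zero.mpr (mul_ne_zero (hsup0 a) (hsup0 b)))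
        (coeIdeal_ne_zero.mpr hM0) ((coeIdeal_le_coeIdeal K).mpr hprod)
    _ = M := hMs

lemma exists_isMaxStarIdeal_ge {P : Ideal D} (hP0 : P ≠ ⊥) (hPtop : P ≠ ⊤)
    (hPs : s.IsStarIdeal P) : ∃ M : Ideal D, s.IsMaxStarIdeal M ∧ P ≤ M := by
  let S : Set (Ideal D) := {J | J ≠ ⊤ ∧ s.IsStarIdeal J ∧ P ≤ J}
  have hchain : ∀ c ⊆ S, IsChain (· ≤ ·) c → ∀ J ∈ c, ∃ ub ∈ S, ∀ J' ∈ c, J' ≤ ub := by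
    intro c hcS hc J hJ
    have hPc : P ≤ sSup c := (hcS hJ).2.2.trans (le_sSup hJ)
    refine ⟨sSup c, ⟨fun htop => ?_, s.isStarIdeal_sSup ⟨J, hJ⟩ hc.directedOn
      (fun J' hJ' => (hcS hJ').2.1) (ne_bot_of_le_ne_bot hP0 hPc), hPc⟩,
      fun J' hJ' => le_sSup hJ'⟩
    obtain ⟨J', hJ'c, h1⟩ := (Submodule.mem_sSup_of_directed ⟨J, hJ⟩ hc.directedOn).mp
      ((Ideal.eq_top_iff_one _).mp htop)
    exact (hcS hJ'c).1 ((Ideal.eq_top_iff_one _).mpr h1)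
  obtain ⟨M, hPM, ⟨hMtop, hMs, -⟩, hmax⟩ := zorn_le_nonempty₀ S hchain P ⟨hPtop, hPs, le_rfl⟩
  have hM0 : M ≠ ⊥ := ne_bot_of_le_ne_bot hP0 hPM
  have hmax' (J : Ideal D) (hJtop : J ≠ ⊤) (hJs : s.IsStarIdeal J) (hMJ : M ≤ J) : J = M :=
    le_antisymm (hmax ⟨hJtop, hJs, hPM.trans hMJ⟩ hMJ) hMJ
  exact ⟨M, ⟨hM0, hMtop, s.isPrime_of_maximal hM0 hMtop hMs hmax', hMs, hmax'⟩, hPM⟩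

variable {s}

lemma IsMaxStarIdeal.isTMax {P : Ideal D} (hP : s.IsMaxStarIdeal P) (ht : IsTIdeal D K P) :
    IsTMax D K P :=
  ⟨hP.1, hP.2.1, ht, fun J hJtop hJt hPJ =>
    hP.2.2.2.2 J hJtop (s.isStarIdeal_of_isTIdeal (ne_bot_of_le_ne_bot hP.1 hPJ) hJt) hPJ⟩

end StarOperation

theorem stmt10 (s : StarOperation D K)
    (h : ∀ P : Ideal D, HeightOnePrime D P ↔ s.IsMaxStarIdeal P) :
    ∀ P : Ideal D, (HeightOnePrime D P ↔ InAssKD D P) ∧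
      (HeightOnePrime D P ↔ IsTMax D K P) ∧ (HeightOnePrime D P ↔ IsWMax D K P) := by
  have isTMax_of_heightOnePrime {P : Ideal D} (hP : HeightOnePrime D P) : IsTMax D K P :=
    ((h P).mp hP).isTMax hP.isTIdeal
  have exists_heightOnePrime_ge {T : Ideal D} (hT0 : T ≠ ⊥) (hTtop : T ≠ ⊤)
      (hT : IsTIdeal D K T) : ∃ M, HeightOnePrime D M ∧ T ≤ M := by
    obtain ⟨M, hM, hTM⟩ :=
      s.exists_isMaxStarIdeal_ge hT0 hTtop (s.isStarIdeal_of_isTIdeal hT0 hT)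
    exact ⟨M, (h M).mpr hM, hTM⟩
  intro P
  refine ⟨⟨HeightOnePrime.inAssKD, fun hP => ?_⟩, ⟨isTMax_of_heightOnePrime, fun hP => ?_⟩,
    ⟨fun hP => (isTMax_of_heightOnePrime hP).isWMax, fun hP => ?_⟩⟩
  · obtain ⟨M, hM, hPM⟩ := exists_heightOnePrime_ge hP.ne_bot hP.1.ne_top (hP.isTIdeal (K := K))
    exact hM.eq_of_le hP.1 hP.ne_bot hPM ▸ hM
  · obtain ⟨hP0, hPtop, hPt, hmax⟩ := hP
    obtain ⟨M, hM, hPM⟩ := exists_heightOnePrime_ge hP0 hPtop hPt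
    exact hmax M hM.1.ne_top hM.isTIdeal hPM ▸ hM
  · obtain ⟨hP0, hPtop, hPw, hmax⟩ := hP
    obtain ⟨M, hM, hPM⟩ := exists_heightOnePrime_ge (ne_bot_of_le_ne_bot hP0 le_tClosure)
      (tClosure_ne_top hPw hPtop) isTIdeal_tClosure
    exact hmax M hM.1.ne_top hM.isTIdeal.isWIdeal (le_tClosure.trans hPM) ▸ hM
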